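/- Let M and M' be two maximum matchings of the same finite bipartite graph G = (V, F, E). Then the coarse decompositions of G with respect to M and with respect to M' coincide: T_I(M) = T_I(M'), T_C(M) = T_C(M'), and T_O(M) = T_O(M'). In other words, the coarse decomposition of a bipartite graph is independent of the choice of maximum matching. -/

import Mathlib

variable {F V : Type*} [Fintype F] [Fintype V] [DecidableEq F] [DecidableEq V]

/-- `M` is a matching of the bipartite graph with edge set `E`:
`M ⊆ E` and no two edges of `M` share an endpoint. -/
def IsMatching (E M : Finset (F × V)) : Prop :=
  M ⊆ E ∧ (∀ e ∈ M, ∀ e' ∈ M, e.1 = e'.1 → e = e') ∧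
    ∀ e ∈ M, ∀ e' ∈ M, e.2 = e'.2 → e = e'

/-- `M` is a maximum matching: a matching of greatest cardinality. -/
def IsMaxMatching (E M : Finset (F × V)) : Prop :=
  IsMatching E M ∧ ∀ M' : Finset (F × V), IsMatching E M' → M'.card ≤ M.card

/-- The (symmetric) adjacency relation of the bipartite graph on `F ⊕ V`. -/
def sumAdj (E : Finset (F × V)) : (F ⊕ V) → (F ⊕ V) → Prop
  | Sum.inl f, Sum.inr v => (f, v) ∈ E
  | Sum.inr v, Sum.inl f => (f, v) ∈ E
  | _, _ => False

/-- The pair of consecutive path vertices forms an edge belonging to `M`. -/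
def pairInM (M : Finset (F × V)) : (F ⊕ V) × (F ⊕ V) → Prop
  | (Sum.inl f, Sum.inr v) => (f, v) ∈ M
  | (Sum.inr v, Sum.inl f) => (f, v) ∈ M
  | _ => False

/-- `l` is an `M`-alternating path in the bipartite graph with edge set `E`:
a nonempty sequence of distinct vertices in which consecutive vertices are joined
by edges of `E` lying alternately inside and outside `M`. -/
def IsAltPath (E M : Finset (F × V)) (l : List (F ⊕ V)) : Prop :=
  l ≠ [] ∧ l.Nodup ∧ l.Chain' (sumAdj E) ∧
    (l.zip l.tail).Chain' fun e e' => pairInM M e ↔ ¬ pairInM M e'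

/-- `v ∈ V` is not an endpoint of any edge of `M`. -/
def VUnmatched (M : Finset (F × V)) (v : V) : Prop := ∀ f, (f, v) ∉ M

/-- `f ∈ F` is not an endpoint of any edge of `M`. -/
def FUnmatched (M : Finset (F × V)) (f : F) : Prop := ∀ v, (f, v) ∉ M

/-- The incomplete set `T_I`: all vertices reachable from some `M`-unmatched
vertex of `V` by a (possibly trivial) `M`-alternating path. -/
def incompleteSet (E M : Finset (F × V)) : Set (F ⊕ V) :=
  {x | ∃ v : V, VUnmatched M v ∧ ∃ l : List (F ⊕ V),
    IsAltPath E M l ∧ l.head? = some (Sum.inr v) ∧ l.getLast? = some x}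

/-- The overcomplete set `T_O`: all vertices reachable from some `M`-unmatched
vertex of `F` by a (possibly trivial) `M`-alternating path. -/
def overcompleteSet (E M : Finset (F × V)) : Set (F ⊕ V) :=
  {x | ∃ f : F, FUnmatched M f ∧ ∃ l : List (F ⊕ V),
    IsAltPath E M l ∧ l.head? = some (Sum.inl f) ∧ l.getLast? = some x}

/-- The complete set `T_C = (V ∪ F) \ (T_I ∪ T_O)`. -/
def completeSet (E M : Finset (F × V)) : Set (F ⊕ V) :=
  Set.univ \ (incompleteSet E M ∪ overcompleteSet E M)

/-!
Alternation along a path from an unmatched vertex of `V` is a condition on its single steps, so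
alternating walks can be shortcut to alternating paths. For a maximum matching `M`, a vertex
`v ∈ V` lies in `T_I(M)` iff some maximum matching misses `v`: exchanging the matching edges along
an alternating path one at a time moves the unmatched vertex from its start to its end;
conversely, if a maximum matching `N` misses `v`, the `M`-partner `f` of `v` is matched in `N` to
some `w`, and exchanging `(f, w)` for `(f, v)` brings `N` closer to `M`, so by induction `w`, hence
`f` and `v`, lie in `T_I(M)`. A vertex of `F` lies in `T_I(M)` iff it has a neighbour in
`T_I(M) ∩ V`. Neither description depends on `M`; `T_O` is `T_I` of the transposed graph, and
`T_C` is the rest.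
-/

open Sum Relation

theorem List.exists_nodup_isChain_cons_of_reflTransGen {α : Type*} {r : α → α → Prop} {a b : α}
    (h : ReflTransGen r a b) :
    ∃ l, (a :: l).Nodup ∧ (a :: l).IsChain r ∧ (a :: l).getLast? = some b := by
  induction h using ReflTransGen.head_induction_on with
  | refl => exact ⟨[], by simp, .singleton _, rfl⟩
  | @head a c hac _ ih =>
    obtain ⟨l, hnd, hc, hlast⟩ := ih
    by_cases ha : a ∈ c :: l
    · obtain ⟨p, s, hps⟩ := List.append_of_mem ha
      refine ⟨s, ?_, ?_, ?_⟩
      · exact hnd.sublist (hps ▸ List.sublist_append_right _ _)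
      · exact hc.suffix (hps ▸ List.suffix_append _ _)
      · rw [hps, List.getLast?_append_of_ne_nil _ (List.cons_ne_nil _ _)] at hlast
        exact hlast
    · exact ⟨c :: l, List.nodup_cons.2 ⟨ha, hnd⟩, hc.cons_cons hac, by simpa using hlast⟩

section
variable {F V : Type*} {E M : Finset (F × V)}

/-- Along an `M`-alternating path that starts at an `M`-unmatched vertex of `V`, the edges from `V`
to `F` lie outside `M` and those from `F` to `V` lie in `M`; this turns alternation into a
condition on single steps. -/
def AltStep (E M : Finset (F × V)) : F ⊕ V → F ⊕ V → Prop
  | inr v, inl f => (f, v) ∈ E ∧ (f, v) ∉ M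
  | inl f, inr v => (f, v) ∈ M
  | _, _ => False

theorem altStep_iff (hME : M ⊆ E) {a b : F ⊕ V} :
    AltStep E M a b ↔ sumAdj E a b ∧ (pairInM M (a, b) ↔ a.isLeft) := by
  rcases a with f | v <;> rcases b with g | w <;>
    simp only [AltStep, sumAdj, pairInM, isLeft_inl, isLeft_inr] <;> grind

theorem isChain_altStep_iff (hME : M ⊆ E) (x : F ⊕ V) (l : List (F ⊕ V)) :
    (x :: l).IsChain (AltStep E M) ↔ (x :: l).IsChain (sumAdj E) ∧
      ((x :: l).zip l).IsChain (fun e e' => pairInM M e ↔ ¬ pairInM M e') ∧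
      ∀ y ∈ l.head?, (pairInM M (x, y) ↔ x.isLeft) := by
  induction l generalizing x with
  | nil => simp
  | cons y l ih =>
    have hside : sumAdj E x y → x.isLeft = !y.isLeft := by
      rcases x with f | v <;> rcases y with g | w <;> simp [sumAdj]
    rcases l with _ | ⟨z, l⟩
    · simp [altStep_iff hME]
    · simp only [List.isChain_cons_cons, ih, altStep_iff hME, List.zip_cons_cons,
        List.head?_cons, Option.mem_def, Option.some.injEq, forall_eq']
      grind

theorem isAltPath_inr_cons_iff (hME : M ⊆ E) {v : V} (hv : VUnmatched M v) (l : List (F ⊕ V)) :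
    IsAltPath E M (inr v :: l) ↔
      (inr v :: l).Nodup ∧ (inr v :: l).IsChain (AltStep E M) := by
  have hstart : ∀ y ∈ l.head?, (pairInM M (inr v, y) ↔ (inr v : F ⊕ V).isLeft) := by
    rintro (f | w) -
    · simpa [pairInM] using hv f
    · simp [pairInM]
  rw [IsAltPath, List.Chain', List.Chain', isChain_altStep_iff hME]
  exact ⟨fun ⟨_, hnd, hadj, halt⟩ => ⟨hnd, hadj, halt, hstart⟩,
    fun ⟨hnd, hadj, halt, _⟩ => ⟨List.cons_ne_nil _ _, hnd, hadj, halt⟩⟩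

def AltReachable (E M : Finset (F × V)) (x : F ⊕ V) : Prop :=
  ∃ v, VUnmatched M v ∧ ReflTransGen (AltStep E M) (inr v) x

theorem mem_incompleteSet_iff_altReachable (hME : M ⊆ E) {x : F ⊕ V} :
    x ∈ incompleteSet E M ↔ AltReachable E M x := by
  constructor
  · rintro ⟨v, hv, _ | ⟨y, l⟩, hl, hhead, hlast⟩
    · exact absurd rfl hl.1
    obtain rfl : y = inr v := by simpa using hhead
    refine ⟨v, hv, List.relationReflTransGen_of_exists_isChain_cons l
      ((isAltPath_inr_cons_iff hME hv l).1 hl).2 ?_⟩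
    simpa [List.getLast?_eq_some_getLast] using hlast
  · rintro ⟨v, hv, hvx⟩
    obtain ⟨l, hnd, hc, hlast⟩ := List.exists_nodup_isChain_cons_of_reflTransGen hvx
    exact ⟨v, hv, inr v :: l, (isAltPath_inr_cons_iff hME hv l).2 ⟨hnd, hc⟩, rfl, hlast⟩

theorem IsMatching.mono {N : Finset (F × V)} (hM : IsMatching E M) (hNM : N ⊆ M) :
    IsMatching E N :=
  ⟨hNM.trans hM.1, fun e he e' he' => hM.2.1 e (hNM he) e' (hNM he'),
    fun e he e' he' => hM.2.2 e (hNM he) e' (hNM he')⟩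

theorem IsMatching.insert [DecidableEq (F × V)] (hM : IsMatching E M) {f : F} {v : V}
    (hfv : (f, v) ∈ E) (hf : FUnmatched M f) (hv : VUnmatched M v) :
    IsMatching E (insert (f, v) M) := by
  refine ⟨Finset.insert_subset hfv hM.1, ?_, ?_⟩ <;>
  · rintro ⟨g, u⟩ hgu ⟨g', u'⟩ hgu' h
    rw [Finset.mem_insert] at hgu hgu'
    grind [FUnmatched, VUnmatched, hM.2.1, hM.2.2]

theorem IsMaxMatching.exists_mem_of_vUnmatched {N : Finset (F × V)} (hN : IsMaxMatching E N)
    {f : F} {v : V} (hfv : (f, v) ∈ E) (hv : VUnmatched N v) : ∃ w, (f, w) ∈ N := by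
  classical
  by_contra! hf
  have := hN.2 _ (hN.1.insert hfv hf hv)
  rw [Finset.card_insert_of_notMem (hv f)] at this
  omega

theorem IsMaxMatching.exists_exchange {N : Finset (F × V)} (hN : IsMaxMatching E N)
    {f : F} {v w : V} (hfw : (f, w) ∈ N) (hfv : (f, v) ∈ E) (hv : VUnmatched N v) :
    ∃ N', IsMaxMatching E N' ∧ (f, v) ∈ N' ∧ VUnmatched N' w ∧
      ∀ g u, g ≠ f → ((g, u) ∈ N' ↔ (g, u) ∈ N) := by
  classical
  have hfw_unique : ∀ u, (f, u) ∈ N → u = w := fun u hu =>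
    congrArg Prod.snd (hN.1.2.1 _ hu _ hfw rfl)
  have hmatch : IsMatching E (insert (f, v) (N.erase (f, w))) :=
    (hN.1.mono (Finset.erase_subset _ _)).insert hfv
      (fun u hu => (Finset.mem_erase.1 hu).1 (by rw [hfw_unique u (Finset.mem_of_mem_erase hu)]))
      (fun g hg => hv g (Finset.mem_of_mem_erase hg))
  have hcard : (insert (f, v) (N.erase (f, w))).card = N.card := by
    rw [Finset.card_insert_of_notMem (fun h => hv f (Finset.mem_of_mem_erase h)),
      Finset.card_erase_add_one hfw]
  refine ⟨_, ⟨hmatch, fun K hK => hcard ▸ hN.2 K hK⟩, Finset.mem_insert_self _ _, ?_, ?_⟩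
  · intro g hg
    rcases Finset.mem_insert.1 hg with h | h
    · obtain ⟨rfl, rfl⟩ := Prod.mk.inj h
      exact hv _ hfw
    · exact (Finset.mem_erase.1 h).1 (hN.1.2.2 _ (Finset.mem_of_mem_erase h) _ hfw rfl)
  · intro g u hg
    simp [hg]

theorem AltReachable.tail {x y : F ⊕ V} (hx : AltReachable E M x) (hxy : AltStep E M x y) :
    AltReachable E M y :=
  let ⟨v, hv, hvx⟩ := hx
  ⟨v, hv, hvx.tail hxy⟩

theorem AltReachable.inl_of_adj (hM : IsMatching E M) {f : F} {v : V}
    (hv : AltReachable E M (inr v)) (hfv : (f, v) ∈ E) : AltReachable E M (inl f) := by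
  by_cases hfvM : (f, v) ∈ M
  · -- `v` is matched, so a walk reaching it comes from its partner `f`
    obtain ⟨u, hu, hreach⟩ := hv
    rcases hreach.cases_tail with heq | ⟨(g | w), hg, hgv⟩
    · cases heq
      exact absurd hfvM (hu f)
    · obtain rfl : g = f := congrArg Prod.fst (hM.2.2 _ hgv _ hfvM rfl)
      exact ⟨u, hu, hg⟩
    · exact hgv.elim
  · exact hv.tail ⟨hfv, hfvM⟩

theorem AltReachable.exists_of_inl {f : F} (h : AltReachable E M (inl f)) :
    ∃ v, AltReachable E M (inr v) ∧ (f, v) ∈ E := by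
  obtain ⟨u, hu, hreach⟩ := h
  rcases hreach.cases_tail with heq | ⟨(g | w), hw, hwf⟩
  · cases heq
  · exact hwf.elim
  · exact ⟨w, ⟨u, hu, hw⟩, hwf.1⟩

theorem IsMaxMatching.altReachable_of_vUnmatched {N : Finset (F × V)} (hN : IsMaxMatching E N)
    (hM : IsMatching E M) {v : V} (hv : VUnmatched N v) : AltReachable E M (inr v) := by
  classical
  induction hn : (M \ N).card using Nat.strong_induction_on generalizing N v with
  | _ n ih =>
  by_cases hvM : VUnmatched M v
  · exact ⟨v, hvM, .refl⟩
  obtain ⟨f, hfv⟩ : ∃ f, (f, v) ∈ M := by simpa [VUnmatched] using hvM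
  obtain ⟨w, hfw⟩ := hN.exists_mem_of_vUnmatched (hM.1 hfv) hv
  obtain ⟨N', hN', hfvN', hw, hagree⟩ := hN.exists_exchange hfw (hM.1 hfv) hv
  have hsub : M \ N' ⊂ M \ N := by
    refine (Finset.ssubset_iff_of_subset ?_).2
      ⟨(f, v), Finset.mem_sdiff.2 ⟨hfv, hv f⟩, fun h => (Finset.mem_sdiff.1 h).2 hfvN'⟩
    rintro ⟨g, u⟩ hgu
    rw [Finset.mem_sdiff] at hgu ⊢
    by_cases hgf : g = f
    · subst hgf
      obtain rfl : u = v := congrArg Prod.snd (hM.2.1 _ hgu.1 _ hfv rfl)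
      exact absurd hfvN' hgu.2
    · exact ⟨hgu.1, (hagree g u hgf).not.1 hgu.2⟩
  have hw_reach := ih _ (hn ▸ Finset.card_lt_card hsub) hN' hw rfl
  exact (hw_reach.inl_of_adj hM (hN.1.1 hfw)).tail hfv

theorem altStep_congr {M' : Finset (F × V)} {f : F}
    (hagree : ∀ g u, g ≠ f → ((g, u) ∈ M' ↔ (g, u) ∈ M)) {a b : F ⊕ V}
    (ha : a ≠ inl f) (hb : b ≠ inl f) : AltStep E M' a b ↔ AltStep E M a b := by
  rcases a with g | u <;> rcases b with g' | u' <;> simp only [AltStep]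
  · exact hagree g u' (fun h => ha (h ▸ rfl))
  · rw [hagree g' u (fun h => hb (h ▸ rfl))]

theorem exists_isMaxMatching_vUnmatched_of_isChain {v : V} :
    ∀ (l : List (F ⊕ V)) {M : Finset (F × V)} {v₀ : V}, IsMaxMatching E M → VUnmatched M v₀ →
      (inr v₀ :: l).Nodup → (inr v₀ :: l).IsChain (AltStep E M) →
      (inr v₀ :: l).getLast? = some (inr v) → ∃ N, IsMaxMatching E N ∧ VUnmatched N v
  | [], M, _, hM, hv₀, _, _, hlast => by
    obtain rfl : _ = v := by simpa using hlast
    exact ⟨M, hM, hv₀⟩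
  | [inl _], _, _, _, _, _, _, hlast => by simp at hlast
  | [inr _], _, _, _, _, _, hc, _ => (List.isChain_pair.1 hc).elim
  | inr _ :: _ :: _, _, _, _, _, _, hc, _ => (List.isChain_cons_cons.1 hc).1.elim
  | inl _ :: inl _ :: _, _, _, _, _, _, hc, _ => (List.isChain_cons_cons.1 hc).2.rel.elim
  | inl f :: inr w :: l, _, _, hM, hv₀, hnd, hc, hlast => by
    -- exchanging `(f, w)` for `(f, v₀)` makes `w` unmatched and shortens the path
    obtain ⟨hv₀f, hfw, hc⟩ := by simpa [List.isChain_cons_cons] using hc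
    obtain ⟨M', hM', -, hw, hagree⟩ := hM.exists_exchange hfw hv₀f.1 hv₀
    have hnd' := (List.nodup_cons.1 hnd).2
    refine exists_isMaxMatching_vUnmatched_of_isChain l hM' hw hnd'.of_cons ?_
      (by simpa using hlast)
    refine hc.imp_of_mem_imp fun a b ha hb hab => (altStep_congr hagree ?_ ?_).2 hab <;>
      rintro rfl <;> exact (List.nodup_cons.1 hnd').1 ‹_›

theorem AltReachable.exists_isMaxMatching_vUnmatched (hM : IsMaxMatching E M) {v : V}
    (h : AltReachable E M (inr v)) : ∃ N, IsMaxMatching E N ∧ VUnmatched N v :=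
  let ⟨_, hv₀, hreach⟩ := h
  let ⟨l, hnd, hc, hlast⟩ := List.exists_nodup_isChain_cons_of_reflTransGen hreach
  exists_isMaxMatching_vUnmatched_of_isChain l hM hv₀ hnd hc hlast

theorem IsMaxMatching.incompleteSet_subset (hM : IsMaxMatching E M) {M' : Finset (F × V)}
    (hM' : IsMatching E M') : incompleteSet E M ⊆ incompleteSet E M' := by
  have hinr : ∀ v, AltReachable E M (inr v) → AltReachable E M' (inr v) := fun _ h =>
    let ⟨_, hN, hv⟩ := h.exists_isMaxMatching_vUnmatched hM
    hN.altReachable_of_vUnmatched hM' hv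
  intro x hx
  rw [mem_incompleteSet_iff_altReachable hM.1.1] at hx
  rw [mem_incompleteSet_iff_altReachable hM'.1]
  rcases x with f | v
  · obtain ⟨v, hv, hfv⟩ := hx.exists_of_inl
    exact (hinr v hv).inl_of_adj hM' hfv
  · exact hinr v hx

theorem incompleteSet_eq_of_isMaxMatching {M' : Finset (F × V)} (hM : IsMaxMatching E M)
    (hM' : IsMaxMatching E M') : incompleteSet E M = incompleteSet E M' :=
  (hM.incompleteSet_subset hM'.1).antisymm (hM'.incompleteSet_subset hM.1)

def transposeEdges (E : Finset (F × V)) : Finset (V × F) :=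
  E.map (Equiv.prodComm F V).toEmbedding

@[simp]
theorem mem_transposeEdges {p : V × F} : p ∈ transposeEdges E ↔ p.swap ∈ E := by
  simp [transposeEdges]

@[simp]
theorem transposeEdges_transposeEdges : transposeEdges (transposeEdges E) = E := by
  ext; simp

theorem card_transposeEdges : (transposeEdges E).card = E.card :=
  Finset.card_map _

theorem sumAdj_transposeEdges {a b : F ⊕ V} :
    sumAdj (transposeEdges E) a.swap b.swap ↔ sumAdj E a b := by
  rcases a with f | v <;> rcases b with g | w <;> simp [sumAdj]

theorem pairInM_transposeEdges (e : (F ⊕ V) × (F ⊕ V)) :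
    pairInM (transposeEdges M) (Prod.map Sum.swap Sum.swap e) ↔ pairInM M e := by
  rcases e with ⟨f | v, g | w⟩ <;> simp [pairInM]

theorem isAltPath_transposeEdges {l : List (F ⊕ V)} :
    IsAltPath (transposeEdges E) (transposeEdges M) (l.map Sum.swap) ↔ IsAltPath E M l := by
  simp only [IsAltPath, List.Chain'.eq_1, ← List.map_tail, List.zip_map, List.isChain_map,
    sumAdj_transposeEdges, pairInM_transposeEdges,
    List.nodup_map_iff Sum.swap_leftInverse.injective, ne_eq, List.map_eq_nil_iff]

theorem isMatching_transposeEdges :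
    IsMatching (transposeEdges E) (transposeEdges M) ↔ IsMatching E M := by
  simp only [IsMatching, transposeEdges, Finset.map_subset_map, Finset.forall_mem_map,
    Equiv.coe_toEmbedding, Equiv.prodComm_apply, Prod.fst_swap, Prod.snd_swap, Prod.swap_inj]
  exact and_congr_right fun _ => and_comm

theorem IsMaxMatching.transpose (hM : IsMaxMatching E M) :
    IsMaxMatching (transposeEdges E) (transposeEdges M) := by
  refine ⟨isMatching_transposeEdges.2 hM.1, fun K hK => ?_⟩
  have hcard := hM.2 _ (by simpa using isMatching_transposeEdges.2 hK)
  rwa [card_transposeEdges, ← card_transposeEdges (E := M)] at hcard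

theorem mem_overcompleteSet_iff {x : F ⊕ V} :
    x ∈ overcompleteSet E M ↔ x.swap ∈ incompleteSet (transposeEdges E) (transposeEdges M) := by
  have hun : ∀ f, VUnmatched (transposeEdges M) f ↔ FUnmatched M f := by
    simp [VUnmatched, FUnmatched]
  constructor
  · rintro ⟨f, hf, l, hl, hh, hlast⟩
    exact ⟨f, (hun f).2 hf, l.map Sum.swap, isAltPath_transposeEdges.2 hl, by simp [hh],
      by simp [hlast]⟩
  · rintro ⟨f, hf, l, hl, hh, hlast⟩
    refine ⟨f, (hun f).1 hf, l.map Sum.swap, isAltPath_transposeEdges.1 ?_, ?_, ?_⟩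
    · simpa [List.map_map] using hl
    · simp [hh]
    · simp [hlast]

theorem overcompleteSet_eq_of_isMaxMatching {M' : Finset (F × V)} (hM : IsMaxMatching E M)
    (hM' : IsMaxMatching E M') : overcompleteSet E M = overcompleteSet E M' := by
  ext x
  rw [mem_overcompleteSet_iff, mem_overcompleteSet_iff,
    incompleteSet_eq_of_isMaxMatching hM.transpose hM'.transpose]

end

/-- the coarse decomposition of a finite bipartite graph does not
depend on the choice of maximum matching. -/
theorem coarse_decomposition_unique (E M M' : Finset (F × V))
    (hM : IsMaxMatching E M) (hM' : IsMaxMatching E M') :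
    incompleteSet E M = incompleteSet E M' ∧
    completeSet E M = completeSet E M' ∧
    overcompleteSet E M = overcompleteSet E M' := by
  have hI := incompleteSet_eq_of_isMaxMatching hM hM'
  have hO := overcompleteSet_eq_of_isMaxMatching hM hM'
  exact ⟨hI, by rw [completeSet, completeSet, hI, hO], hO⟩
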